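/- Let F₁ : D → ℝ^r with D ⊆ ℝⁿ, let Δ ⊆ D be closed convex containing 0 with Δ ⊆ {x : ‖x‖_∞ ≤ ε}, and assume J_{F₁} is γ-Lipschitz (in spectral norm) on Δ. Let δ ≥ ε and k > 1 + (√n + nγ)δ. Suppose the r×(n+1) matrix (J_{F₁}(0) | F₁(0)) satisfies σ_r(J_{F₁}(0) | F₁(0)) > kδ, but σ_r(J_{F₁}(0)) < δ (i.e. rank_{δ,k}(J_{F₁}(0)) < r). Then there is no x* ∈ Δ with F₁(x*) = 0. -/

import Mathlib

open Matrix

noncomputable def kthLargest {m : Type*} [Fintype m] (f : m → ℝ) (j : ℕ) : ℝ :=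
  let c := Fintype.card m
  let g : Fin c → ℝ := f ∘ (Fintype.equivFin m).symm
  if h : c - j < c then (g ∘ Tuple.sort g) ⟨c - j, h⟩ else 0

noncomputable def singularValue {m n : Type*} [Fintype m] [Fintype n] [DecidableEq n]
    (A : Matrix m n ℝ) (j : ℕ) : ℝ :=
  Real.sqrt (kthLargest (Matrix.isHermitian_conjTranspose_mul_self A).eigenvalues j)

noncomputable def specNorm {m n : Type*} [Fintype m] [Fintype n] [DecidableEq n]
    (A : Matrix m n ℝ) : ℝ := singularValue A 1

noncomputable def vec2 {n : Type*} [Fintype n] (v : n → ℝ) : ℝ :=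
  Real.sqrt (∑ i, v i ^ 2)

/-!
Suppose `F₁ x* = 0` with `x* ∈ Δ`. The Taylor property gives `F₁ 0 = -J(z) x*`, so the last
column of `M = (J(0) | F₁(0))` is `-J(0) x*` up to the residual `(J(0) - J(z)) x*`, whose norm is
at most `γ ‖z‖ ‖x*‖ ≤ γ n δ²`. If `J(0)` has gain at most `σ_r(J(0)) < δ` on a subspace `V` of
codimension `r - 1`, then `M` has gain at most `δ (1 + √n δ) + γ n δ² < k δ` on the subspace
`{(v + t x*, t) : v ∈ V, t ∈ ℝ}`, which again has codimension `r - 1` in `ℝⁿ⁺¹`. By the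
Courant–Fischer characterisation of singular values, `σ_r(M) < k δ`, a contradiction.
-/

open scoped RealInnerProductSpace
open Module Submodule Set

namespace OrthonormalBasis

variable {ι E : Type*} [Fintype ι] [NormedAddCommGroup E] [InnerProductSpace ℝ E]
  (b : OrthonormalBasis ι ℝ E)

theorem finrank_span_restrict (S : Finset ι) :
    finrank ℝ (span ℝ (range fun i : S => b i)) = S.card :=
  (finrank_span_eq_card
    (b.orthonormal.comp (Subtype.val : S → ι) Subtype.val_injective).linearIndependent).trans
    (Fintype.card_coe S)

theorem inner_eq_zero_of_mem_span_restrict {S : Finset ι} {x : E}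
    (hx : x ∈ span ℝ (range fun i : S => b i)) {i : ι} (hi : i ∉ S) : ⟪b i, x⟫ = 0 := by
  refine span_induction ?_ (inner_zero_right _)
    (fun _ _ _ _ h h' => by rw [inner_add_right, h, h', add_zero])
    (fun c _ _ h => by rw [inner_smul_right, h, mul_zero]) hx
  rintro _ ⟨j, rfl⟩
  exact b.orthonormal.2 fun h => hi (h ▸ j.2)

theorem sum_mul_inner_sq_le_of_mem_span_restrict (μ : ι → ℝ) {S : Finset ι} {t : ℝ}
    (hμ : ∀ i ∈ S, μ i ≤ t) {x : E} (hx : x ∈ span ℝ (range fun i : S => b i)) :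
    ∑ i, μ i * ⟪b i, x⟫ ^ 2 ≤ t * ‖x‖ ^ 2 := by
  rw [← b.sum_sq_inner_right, Finset.mul_sum]
  refine Finset.sum_le_sum fun i _ => ?_
  by_cases hi : i ∈ S
  · exact mul_le_mul_of_nonneg_right (hμ i hi) (sq_nonneg _)
  · simp [b.inner_eq_zero_of_mem_span_restrict hx hi]

theorem mul_norm_sq_le_sum_mul_inner_sq_of_mem_span_restrict (μ : ι → ℝ) {S : Finset ι} {t : ℝ}
    (hμ : ∀ i ∈ S, t ≤ μ i) {x : E} (hx : x ∈ span ℝ (range fun i : S => b i)) :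
    t * ‖x‖ ^ 2 ≤ ∑ i, μ i * ⟪b i, x⟫ ^ 2 := by
  rw [← b.sum_sq_inner_right, Finset.mul_sum]
  refine Finset.sum_le_sum fun i _ => ?_
  by_cases hi : i ∈ S
  · exact mul_le_mul_of_nonneg_right (hμ i hi) (sq_nonneg _)
  · simp [b.inner_eq_zero_of_mem_span_restrict hx hi]

end OrthonormalBasis

namespace Matrix

variable {m n : Type*} [Fintype m] [Fintype n] [DecidableEq n]

theorem norm_toEuclideanLin_sq (A : Matrix m n ℝ) (x : EuclideanSpace ℝ n) :
    ‖toEuclideanLin A x‖ ^ 2 =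
      ∑ i, (isHermitian_conjTranspose_mul_self A).eigenvalues i *
        ⟪(isHermitian_conjTranspose_mul_self A).eigenvectorBasis i, x⟫ ^ 2 := by
  classical
  set hA := isHermitian_conjTranspose_mul_self A
  set b := hA.eigenvectorBasis
  have hb : ∀ i, toEuclideanLin (Aᴴ * A) (b i) = hA.eigenvalues i • b i := fun i =>
    WithLp.ofLp_injective 2 (hA.mulVec_eigenvectorBasis i)
  have hx : toEuclideanLin (Aᴴ * A) x = ∑ i, (⟪b i, x⟫ * hA.eigenvalues i) • b i := by
    conv_lhs => rw [← b.sum_repr' x]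
    simp only [map_sum, map_smul, hb, smul_smul]
  rw [← real_inner_self_eq_norm_sq, ← LinearMap.adjoint_inner_right,
    ← toEuclideanLin_conjTranspose_eq_adjoint, ← LinearMap.comp_apply, ← toLpLin_mul_same, hx]
  simp only [inner_sum, inner_smul_right, real_inner_comm x]
  exact Finset.sum_congr rfl fun i _ => by ring

/-- The eigenvalues of `Aᴴ * A` in increasing order: `singularValue A j` is the square root of the
entry with index `card n - j`. -/
noncomputable def sortedGramEigenvalues (A : Matrix m n ℝ) : Fin (Fintype.card n) → ℝ :=
  let g := (isHermitian_conjTranspose_mul_self A).eigenvalues ∘ (Fintype.equivFin n).symm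
  g ∘ Tuple.sort g

noncomputable def sortedGramEigenbasis (A : Matrix m n ℝ) :
    OrthonormalBasis (Fin (Fintype.card n)) ℝ (EuclideanSpace ℝ n) :=
  let g := (isHermitian_conjTranspose_mul_self A).eigenvalues ∘ (Fintype.equivFin n).symm
  (isHermitian_conjTranspose_mul_self A).eigenvectorBasis.reindex
    ((Fintype.equivFin n).trans (Tuple.sort g).symm)

variable (A : Matrix m n ℝ)

theorem monotone_sortedGramEigenvalues : Monotone (sortedGramEigenvalues A) :=
  Tuple.monotone_sort _

theorem sortedGramEigenvalues_nonneg (l : Fin (Fintype.card n)) :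
    0 ≤ sortedGramEigenvalues A l :=
  eigenvalues_conjTranspose_mul_self_nonneg A _

theorem norm_toEuclideanLin_sq_eq_sum_sorted (x : EuclideanSpace ℝ n) :
    ‖toEuclideanLin A x‖ ^ 2 =
      ∑ l, sortedGramEigenvalues A l * ⟪sortedGramEigenbasis A l, x⟫ ^ 2 := by
  set g := (isHermitian_conjTranspose_mul_self A).eigenvalues ∘ (Fintype.equivFin n).symm
  rw [norm_toEuclideanLin_sq,
    ← Equiv.sum_comp ((Fintype.equivFin n).trans (Tuple.sort g).symm).symm]
  simp [sortedGramEigenvalues, sortedGramEigenbasis, g]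

end Matrix

section SingularValue

variable {m n : Type*} [Fintype m] [Fintype n] [DecidableEq n] (A : Matrix m n ℝ)

theorem singularValue_nonneg (j : ℕ) : 0 ≤ singularValue A j :=
  Real.sqrt_nonneg _

theorem singularValue_eq_zero_of_le {j : ℕ} (h : Fintype.card n ≤ Fintype.card n - j) :
    singularValue A j = 0 := by
  rw [singularValue, kthLargest, dif_neg h.not_gt, Real.sqrt_zero]

theorem singularValue_sq {j : ℕ} (h : Fintype.card n - j < Fintype.card n) :
    singularValue A j ^ 2 = sortedGramEigenvalues A ⟨Fintype.card n - j, h⟩ := by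
  rw [singularValue, kthLargest, dif_pos h]
  exact Real.sq_sqrt (sortedGramEigenvalues_nonneg A _)

theorem exists_submodule_norm_toEuclideanLin_le {j : ℕ} (hj : 1 ≤ j) :
    ∃ W : Submodule ℝ (EuclideanSpace ℝ n), Fintype.card n + 1 - j ≤ finrank ℝ W ∧
      ∀ w ∈ W, ‖toEuclideanLin A w‖ ≤ singularValue A j * ‖w‖ := by
  rcases Nat.eq_zero_or_pos (Fintype.card n) with hc | hc
  · exact ⟨⊥, by omega, fun w hw => by simp [(mem_bot ℝ).1 hw]⟩
  have h : Fintype.card n - j < Fintype.card n := by omega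
  set u := sortedGramEigenbasis A
  refine ⟨span ℝ (range fun i : Finset.Iic (⟨_, h⟩ : Fin _) => u i), ?_, fun w hw => ?_⟩
  · rw [u.finrank_span_restrict, Fin.card_Iic, Fin.val_mk]
    omega
  have hw := u.sum_mul_inner_sq_le_of_mem_span_restrict _
    (fun i hi => monotone_sortedGramEigenvalues A (Finset.mem_Iic.1 hi)) hw
  rw [← norm_toEuclideanLin_sq_eq_sum_sorted, ← singularValue_sq A h, ← mul_pow] at hw
  exact (pow_le_pow_iff_left₀ (norm_nonneg _)
    (mul_nonneg (singularValue_nonneg A j) (norm_nonneg w)) two_ne_zero).1 hw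

/-- `min j (card n)` rather than `j`: for `j > card n` the truncated index `card n - j` makes
`singularValue A j` the smallest singular value. -/
theorem singularValue_le_of_submodule {j : ℕ} (W : Submodule ℝ (EuclideanSpace ℝ n))
    (hW : Fintype.card n + 1 ≤ min j (Fintype.card n) + finrank ℝ W) {t : ℝ} (ht : 0 ≤ t)
    (hb : ∀ w ∈ W, ‖toEuclideanLin A w‖ ≤ t * ‖w‖) : singularValue A j ≤ t := by
  by_cases h : Fintype.card n ≤ Fintype.card n - j
  · exact (singularValue_eq_zero_of_le A h).trans_le ht
  replace h : Fintype.card n - j < Fintype.card n := not_le.1 h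
  set u := sortedGramEigenbasis A
  set U := span ℝ (range fun i : Finset.Ici (⟨_, h⟩ : Fin _) => u i)
  obtain ⟨x, hxU, hxW, hx0⟩ : ∃ x ∈ U, x ∈ W ∧ x ≠ 0 := by
    by_contra! hUW
    have := finrank_add_finrank_le_of_disjoint (disjoint_def.2 hUW)
    rw [u.finrank_span_restrict, Fin.card_Ici, Fin.val_mk, finrank_euclideanSpace] at this
    omega
  have hlow := u.mul_norm_sq_le_sum_mul_inner_sq_of_mem_span_restrict _
    (fun i hi => monotone_sortedGramEigenvalues A (Finset.mem_Ici.1 hi)) hxU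
  rw [← norm_toEuclideanLin_sq_eq_sum_sorted, ← singularValue_sq A h] at hlow
  have hup : ‖toEuclideanLin A x‖ ^ 2 ≤ t ^ 2 * ‖x‖ ^ 2 := by
    rw [← mul_pow]
    exact pow_le_pow_left₀ (norm_nonneg _) (hb x hxW) 2
  have hsq : singularValue A j ^ 2 ≤ t ^ 2 :=
    le_of_mul_le_mul_right (hlow.trans hup) (by positivity)
  exact (pow_le_pow_iff_left₀ (singularValue_nonneg A j) ht two_ne_zero).1 hsq

theorem norm_toEuclideanLin_le_specNorm_mul (x : EuclideanSpace ℝ n) :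
    ‖toEuclideanLin A x‖ ≤ specNorm A * ‖x‖ := by
  obtain ⟨W, hW, hbound⟩ := exists_submodule_norm_toEuclideanLin_le A le_rfl
  have hW_top : W = ⊤ := eq_top_of_finrank_eq
    ((finrank_le W).antisymm (by rw [finrank_euclideanSpace]; omega))
  exact hbound x (hW_top ▸ mem_top)

end SingularValue

section AugmentedMatrix

variable {m n : Type*} [Fintype n]

def augmentShear (x : EuclideanSpace ℝ n) :
    EuclideanSpace ℝ n × ℝ →ₗ[ℝ] EuclideanSpace ℝ (n ⊕ Fin 1) where
  toFun p := WithLp.toLp 2 (Sum.elim (p.1 + p.2 • x) fun _ => p.2)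
  map_add' p q := by
    ext (i | i) <;> simp
    ring
  map_smul' c p := by
    ext (i | i) <;> simp
    ring

theorem norm_augmentShear_sq (x v : EuclideanSpace ℝ n) (t : ℝ) :
    ‖augmentShear x (v, t)‖ ^ 2 = ‖v + t • x‖ ^ 2 + t ^ 2 := by
  simp [augmentShear, EuclideanSpace.real_norm_sq_eq, Fintype.sum_sum_type]

theorem injective_augmentShear (x : EuclideanSpace ℝ n) :
    Function.Injective (augmentShear x) := by
  refine (injective_iff_map_eq_zero _).2 fun ⟨v, t⟩ h => ?_
  have h2 := norm_augmentShear_sq x v t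
  rw [h, norm_zero] at h2
  have ht : t = 0 := by nlinarith [sq_nonneg ‖v + t • x‖]
  have hv : ‖v + t • x‖ = 0 := by nlinarith [sq_nonneg ‖v + t • x‖]
  rw [ht, zero_smul, add_zero, norm_eq_zero] at hv
  rw [hv, ht, Prod.mk_zero_zero]

variable [DecidableEq n]

theorem toEuclideanLin_fromCols_augmentShear (A : Matrix m n ℝ) (b : m → ℝ)
    (x v : EuclideanSpace ℝ n) (t : ℝ) :
    toEuclideanLin (fromCols A (replicateCol (Fin 1) b)) (augmentShear x (v, t)) =
      toEuclideanLin A v + t • (toEuclideanLin A x + WithLp.toLp 2 b) := by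
  ext i
  simp [augmentShear, toLpLin_apply, mulVec_add, mulVec_smul, mulVec, dotProduct]
  ring

theorem singularValue_fromCols_replicateCol_le [Fintype m] (A : Matrix m n ℝ) (b : m → ℝ)
    (x : EuclideanSpace ℝ n) (j : ℕ) :
    singularValue (fromCols A (replicateCol (Fin 1) b)) j ≤
      singularValue A j * (1 + ‖x‖) + ‖toEuclideanLin A x + WithLp.toLp 2 b‖ := by
  set ρ := ‖toEuclideanLin A x + WithLp.toLp 2 b‖
  have hσ := singularValue_nonneg A j
  have hbound : 0 ≤ singularValue A j * (1 + ‖x‖) + ρ := by positivity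
  rcases Nat.eq_zero_or_pos j with rfl | hj
  · exact (singularValue_eq_zero_of_le _ (by simp)).trans_le hbound
  obtain ⟨V, hV, hAV⟩ := exists_submodule_norm_toEuclideanLin_le A hj
  let φ := augmentShear x ∘ₗ V.subtype.prodMap LinearMap.id
  have hφ : finrank ℝ (LinearMap.range φ) = finrank ℝ V + 1 := by
    have hinj : Function.Injective φ := by
      rw [LinearMap.coe_comp, LinearMap.coe_prodMap]
      exact (injective_augmentShear x).comp (Subtype.val_injective.prodMap Function.injective_id)
    rw [LinearMap.finrank_range_of_inj hinj, Module.finrank_prod, Module.finrank_self]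
  refine singularValue_le_of_submodule _ (LinearMap.range φ) ?_ hbound ?_
  · rw [hφ, Fintype.card_sum, Fintype.card_fin]
    omega
  rintro _ ⟨⟨⟨v, hv⟩, t⟩, rfl⟩
  change ‖toEuclideanLin _ (augmentShear x (v, t))‖ ≤ _ * ‖augmentShear x (v, t)‖
  rw [toEuclideanLin_fromCols_augmentShear]
  set N := ‖augmentShear x (v, t)‖
  have hsq := norm_augmentShear_sq x v t
  have ht : |t| ≤ N := abs_le_of_sq_le_sq (by nlinarith [sq_nonneg ‖v + t • x‖]) (norm_nonneg _)
  have hvt : ‖v + t • x‖ ≤ N :=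
    (abs_le_of_sq_le_sq (by nlinarith [sq_nonneg t]) (norm_nonneg _)).trans' (le_abs_self _)
  have hv' : ‖v‖ ≤ (1 + ‖x‖) * N := calc
    ‖v‖ = ‖(v + t • x) - t • x‖ := by rw [add_sub_cancel_right]
    _ ≤ ‖v + t • x‖ + |t| * ‖x‖ := by rw [← Real.norm_eq_abs, ← norm_smul]; exact norm_sub_le _ _
    _ ≤ N + N * ‖x‖ := by gcongr
    _ = (1 + ‖x‖) * N := by ring
  calc ‖toEuclideanLin A v + t • (toEuclideanLin A x + WithLp.toLp 2 b)‖
      ≤ ‖toEuclideanLin A v‖ + |t| * ρ := by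
        rw [← Real.norm_eq_abs, ← norm_smul]; exact norm_add_le _ _
    _ ≤ singularValue A j * ‖v‖ + N * ρ := by gcongr; exact hAV v hv
    _ ≤ singularValue A j * ((1 + ‖x‖) * N) + N * ρ := by gcongr
    _ = (singularValue A j * (1 + ‖x‖) + ρ) * N := by ring

end AugmentedMatrix

theorem EuclideanSpace.norm_le_sqrt_card_mul {ι : Type*} [Fintype ι] {x : EuclideanSpace ℝ ι}
    {c : ℝ} (hc : 0 ≤ c) (h : ∀ i, |x i| ≤ c) : ‖x‖ ≤ √(Fintype.card ι) * c := by
  rw [EuclideanSpace.norm_eq, ← Real.sqrt_sq hc, ← Real.sqrt_mul (Nat.cast_nonneg _)]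
  refine Real.sqrt_le_sqrt ?_
  calc ∑ i, ‖x i‖ ^ 2 ≤ ∑ _i : ι, c ^ 2 :=
        Finset.sum_le_sum fun i _ => by
          rw [Real.norm_eq_abs]; exact pow_le_pow_left₀ (abs_nonneg _) (h i) 2
    _ = Fintype.card ι * c ^ 2 := by simp

theorem no_solution_when_jacobian_rank_deficient_general {n r : ℕ}
    (Δ : Set (EuclideanSpace ℝ (Fin n)))
    (hΔconv : Convex ℝ Δ)
    (h0 : (0 : EuclideanSpace ℝ (Fin n)) ∈ Δ)
    (ε δ k γ : ℝ) (hδ : δ ≥ ε) (hγ : 0 ≤ γ)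
    (hk : k > 1 + (Real.sqrt n + n * γ) * δ)
    (hΔbound : ∀ x ∈ Δ, ∀ i, |x i| ≤ ε)
    (F₁ : EuclideanSpace ℝ (Fin n) → (Fin r → ℝ))
    (J : EuclideanSpace ℝ (Fin n) → Matrix (Fin r) (Fin n) ℝ)
    (hLip : ∀ x ∈ Δ, ∀ y ∈ Δ, specNorm (J x - J y) ≤ γ * ‖x - y‖)
    (hTaylor : ∀ x ∈ Δ, ∃ z ∈ segment ℝ (0 : EuclideanSpace ℝ (Fin n)) x,
      F₁ x = F₁ 0 + (J z).mulVec x)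
    (haug : singularValue
      (Matrix.fromCols (J 0) (Matrix.of fun i (_ : Fin 1) => F₁ 0 i)) r > k * δ)
    (hdef : singularValue (J 0) r < δ) :
    ¬ ∃ x ∈ Δ, F₁ x = 0 := by
  rintro ⟨x, hxΔ, hFx⟩
  obtain ⟨z, hz, hFx_eq⟩ := hTaylor x hxΔ
  have hzΔ : z ∈ Δ := hΔconv.segment_subset h0 hxΔ hz
  have hδ0 : 0 < δ := (singularValue_nonneg _ _).trans_lt hdef
  have hΔnorm : ∀ y ∈ Δ, ‖y‖ ≤ √n * δ := fun y hy => by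
    simpa using EuclideanSpace.norm_le_sqrt_card_mul hδ0.le fun i => (hΔbound y hy i).trans hδ
  have hres : toEuclideanLin (J 0) x + WithLp.toLp 2 (F₁ 0) = toEuclideanLin (J 0 - J z) x := by
    have hF0 : F₁ 0 = -(J z *ᵥ x) := eq_neg_of_add_eq_zero_left (hFx ▸ hFx_eq).symm
    apply WithLp.ofLp_injective
    simp [toLpLin_apply, hF0, sub_eq_add_neg]
  have hres_le : ‖toEuclideanLin (J 0 - J z) x‖ ≤ γ * n * δ ^ 2 := calc
    _ ≤ specNorm (J 0 - J z) * ‖x‖ := norm_toEuclideanLin_le_specNorm_mul _ x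
    _ ≤ γ * ‖z‖ * ‖x‖ := by gcongr; simpa using hLip 0 h0 z hzΔ
    _ ≤ γ * (√n * δ) * (√n * δ) := by gcongr; exacts [hΔnorm z hzΔ, hΔnorm x hxΔ]
    _ = γ * n * δ ^ 2 := by
      linear_combination γ * δ ^ 2 * Real.mul_self_sqrt (Nat.cast_nonneg (α := ℝ) n)
  have key : singularValue (fromCols (J 0) (replicateCol (Fin 1) (F₁ 0))) r < k * δ := calc
    _ ≤ singularValue (J 0) r * (1 + ‖x‖) + ‖toEuclideanLin (J 0 - J z) x‖ :=
      hres ▸ singularValue_fromCols_replicateCol_le (J 0) (F₁ 0) x r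
    _ ≤ δ * (1 + √n * δ) + γ * n * δ ^ 2 := by gcongr; exact hΔnorm x hxΔ
    _ = (1 + (√n + n * γ) * δ) * δ := by ring
    _ < k * δ := mul_lt_mul_of_pos_right hk hδ0
  exact lt_asymm key haug

/-- if the augmented matrix (J_{F₁}(0)|F₁(0)) has full numerical
(δ,k)-rank r with k > 1+(√n+nγ)δ, but J_{F₁}(0) is numerically rank deficient,
then F₁ has no zero in Δ. -/
theorem no_solution_when_jacobian_rank_deficient {n r : ℕ}
    (D Δ : Set (EuclideanSpace ℝ (Fin n)))
    (hΔD : Δ ⊆ D) (hΔcl : IsClosed Δ) (hΔconv : Convex ℝ Δ)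
    (h0 : (0 : EuclideanSpace ℝ (Fin n)) ∈ Δ)
    (ε δ k γ : ℝ) (hε : 0 < ε) (hδ : δ ≥ ε) (hγ : 0 ≤ γ)
    (hk : k > 1 + (Real.sqrt n + n * γ) * δ)
    (hΔbound : ∀ x ∈ Δ, ∀ i, |x i| ≤ ε)
    (F₁ : EuclideanSpace ℝ (Fin n) → (Fin r → ℝ))
    (J : EuclideanSpace ℝ (Fin n) → Matrix (Fin r) (Fin n) ℝ)
    (hLip : ∀ x ∈ Δ, ∀ y ∈ Δ, specNorm (J x - J y) ≤ γ * ‖x - y‖)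
    (hTaylor : ∀ x ∈ Δ, ∃ z ∈ segment ℝ (0 : EuclideanSpace ℝ (Fin n)) x,
      F₁ x = F₁ 0 + (J z).mulVec x)
    (haug : singularValue
      (Matrix.fromCols (J 0) (Matrix.of fun i (_ : Fin 1) => F₁ 0 i)) r > k * δ)
    (hdef : singularValue (J 0) r < δ) :
    ¬ ∃ x ∈ Δ, F₁ x = 0 :=
  no_solution_when_jacobian_rank_deficient_general Δ hΔconv h0 ε δ k γ hδ hγ hk hΔbound F₁ J hLip
    hTaylor haug hdef
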